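/- In a run of the abstract learning algorithm, the state-selector subobjects are monotonically non-decreasing and the test-quotients monotonically non-increasing: for all n, α_n^◁ ≤ α_{n+1}^◁ and β_{n+1}^▷ ≤ β_n^▷; moreover strict progress holds: if α_{n+1}^◁ ≤ α_n^◁ then α_{n+1} = α_n, and if β_n^▷ ≤ β_{n+1}^▷ then β_{n+1} = β_n. Consequently, if Q_t has only finitely many isomorphism classes of subobjects and of quotients, every run stabilizes: there exists n with W_{n+1} = W_n. -/

import Mathlib

open CategoryTheory Limits

universe v u

/-- The functor `F_I = I + F(-)`. -/
noncomputable def FIfun {C : Type u} [Category.{v} C] [HasBinaryCoproducts C]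
    (F : C ⥤ C) (I : C) : C ⥤ C where
  obj X := I ⨿ F.obj X
  map f := coprod.map (𝟙 I) (F.map f)

/-- An `(E, M)`-factorisation system with a chosen factorisation of every morphism. -/
structure FactSys (C : Type u) [Category.{v} C] where
  E : MorphismProperty C
  M : MorphismProperty C
  hE : ∀ {X Y : C} (f : X ⟶ Y), E f → Epi f
  hM : ∀ {X Y : C} (f : X ⟶ Y), M f → Mono f
  Im : ∀ {X Y : C}, (X ⟶ Y) → C
  ep : ∀ {X Y : C} (f : X ⟶ Y), X ⟶ Im f
  mo : ∀ {X Y : C} (f : X ⟶ Y), Im f ⟶ Y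
  hep : ∀ {X Y : C} (f : X ⟶ Y), E (ep f)
  hmo : ∀ {X Y : C} (f : X ⟶ Y), M (mo f)
  hfac : ∀ {X Y : C} (f : X ⟶ Y), ep f ≫ mo f = f
  fill : ∀ {X Y Z W : C} (e : X ⟶ Y) (m : Z ⟶ W) (f : X ⟶ Z) (g : Y ⟶ W),
    E e → M m → f ≫ m = e ≫ g → ∃! d : Y ⟶ Z, e ≫ d = f ∧ d ≫ m = g

/-- All the data of the abstract learning situation. -/
structure LearnCtx (C : Type u) [Category.{v} C] [HasBinaryCoproducts C] where
  FS : FactSys C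
  F : C ⥤ C
  I : C
  O : C
  hFE : ∀ {X Y : C} (f : X ⟶ Y), FS.E f → FS.E (F.map f)
  Qt : C
  δt : F.obj Qt ⟶ Qt
  it : I ⟶ Qt
  ot : Qt ⟶ O

/-- A wrapper for the target state space `Q_t`. -/
structure Wrapper {C : Type u} [Category.{v} C] (Qt : C) where
  S : C
  P : C
  α : S ⟶ Qt
  β : Qt ⟶ P

namespace LearnCtx

variable {C : Type u} [Category.{v} C] [HasBinaryCoproducts C] (L : LearnCtx C)

noncomputable def FI : C ⥤ C := FIfun L.F L.I

/-- `τ_W = β ∘ α`. -/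
def tau (W : Wrapper L.Qt) : W.S ⟶ W.P := W.α ≫ W.β

/-- Hypothesis state space `H_W`. -/
def H (W : Wrapper L.Qt) : C := L.FS.Im (L.tau W)

/-- `τ_W^▷`. -/
def tr (W : Wrapper L.Qt) : W.S ⟶ L.H W := L.FS.ep (L.tau W)

/-- `τ_W^◁`. -/
def tl (W : Wrapper L.Qt) : L.H W ⟶ W.P := L.FS.mo (L.tau W)

def Closed (W : Wrapper L.Qt) : Prop :=
  (∃ iW : L.I ⟶ L.H W, iW ≫ L.tl W = L.it ≫ W.β) ∧
  (∃ cl : L.F.obj W.S ⟶ L.H W, cl ≫ L.tl W = L.F.map W.α ≫ L.δt ≫ W.β)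

def Consistent (W : Wrapper L.Qt) : Prop :=
  (∃ oW : L.H W ⟶ L.O, L.tr W ≫ oW = W.α ≫ L.ot) ∧
  (∃ cs : L.F.obj (L.H W) ⟶ W.P, L.F.map (L.tr W) ≫ cs = L.F.map W.α ≫ L.δt ≫ W.β)

/-- The subobject order on morphisms into `Q_t`, via the `M`-parts of their factorisations. -/
def subLE {X Y : C} (f : X ⟶ L.Qt) (g : Y ⟶ L.Qt) : Prop :=
  ∃ u : L.FS.Im f ⟶ L.FS.Im g, u ≫ L.FS.mo g = L.FS.mo f

/-- The quotient order on morphisms out of `Q_t`: `f^▷ ≤ g^▷` iff `g^▷` factors through `f^▷`. -/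
def quotLE {X Y : C} (f : L.Qt ⟶ X) (g : L.Qt ⟶ Y) : Prop :=
  ∃ u : L.FS.Im f ⟶ L.FS.Im g, L.FS.ep f ≫ u = L.FS.ep g

/-- Local closedness of `W` with respect to `α' : S' ⟶ Q_t`. -/
def LocClosed (W : Wrapper L.Qt) {S' : C} (α' : S' ⟶ L.Qt) : Prop :=
  L.subLE α' W.α ∧
  (∃ iW : L.I ⟶ L.H W, iW ≫ L.tl W = L.it ≫ W.β) ∧
  (∃ lc : L.F.obj S' ⟶ L.H W, lc ≫ L.tl W = L.F.map α' ≫ L.δt ≫ W.β)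

/-- Local consistency of `W` with respect to `β' : Q_t ⟶ P'`. -/
def LocConsistent (W : Wrapper L.Qt) {P' : C} (β' : L.Qt ⟶ P') : Prop :=
  L.quotLE W.β β' ∧
  (∃ oW : L.H W ⟶ L.O, L.tr W ≫ oW = W.α ≫ L.ot) ∧
  (∃ lc : L.F.obj (L.H W) ⟶ P', L.F.map (L.tr W) ≫ lc = L.F.map W.α ≫ L.δt ≫ β')

/-- Recursiveness of an `F_I`-coalgebra. -/
def Recursive {S : C} (ρ : S ⟶ L.FI.obj S) : Prop :=
  ∀ (X : C) (x : L.FI.obj X ⟶ X), ∃! f : S ⟶ X, f = ρ ≫ L.FI.map f ≫ x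

/-- `W` is correct up to `ρ`: the `ρ`-restricted language of any hypothesis automaton of `W`
agrees with the `ρ`-restricted language of the target. -/
def CorrectUpTo (W : Wrapper L.Qt) {S' : C} (ρ : S' ⟶ L.FI.obj S') : Prop :=
  ∀ (iW : L.I ⟶ L.H W) (δW : L.F.obj (L.H W) ⟶ L.H W) (oW : L.H W ⟶ L.O),
    iW ≫ L.tl W = L.it ≫ W.β →
    (L.F.map (L.tr W) ≫ δW) ≫ L.tl W = L.F.map W.α ≫ L.δt ≫ W.β →
    L.tr W ≫ oW = W.α ≫ L.ot →
    ∀ (f : S' ⟶ L.H W) (g : S' ⟶ L.Qt),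
      f = ρ ≫ L.FI.map f ≫ coprod.desc iW δW →
      g = ρ ≫ L.FI.map g ≫ coprod.desc L.it L.δt →
      f ≫ oW = g ≫ L.ot

/-- The `α`-component of a wrapper, as an element of a sigma type, so that equality of
`α`-components of wrappers with different state objects can be expressed. -/
def αPart (W : Wrapper L.Qt) : Σ S : C, S ⟶ L.Qt := ⟨W.S, W.α⟩

/-- The `β`-component of a wrapper. -/
def βPart (W : Wrapper L.Qt) : Σ P : C, L.Qt ⟶ P := ⟨W.P, W.β⟩

/-- A run of the abstract learning algorithm. -/
def IsRun (W : ℕ → Wrapper L.Qt) : Prop :=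
  (Nonempty (IsInitial (W 0).S) ∧ Nonempty (IsTerminal (W 0).P)) ∧
  ∀ n : ℕ,
    (¬ L.Closed (W n) →
      L.βPart (W (n + 1)) = L.βPart (W n) ∧ L.LocClosed (W (n + 1)) (W n).α) ∧
    (L.Closed (W n) → ¬ L.Consistent (W n) →
      L.αPart (W (n + 1)) = L.αPart (W n) ∧ L.LocConsistent (W (n + 1)) (W n).β) ∧
    (L.Closed (W n) → L.Consistent (W n) →
      ¬ (∀ (S' : C) (ρ : S' ⟶ L.FI.obj S'), L.Recursive ρ → L.CorrectUpTo (W n) ρ) →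
      L.βPart (W (n + 1)) = L.βPart (W n) ∧
      ∃ (S' : C) (ρ : S' ⟶ L.FI.obj S'), L.Recursive ρ ∧ ¬ L.CorrectUpTo (W n) ρ ∧
        ∃ f : S' ⟶ L.Qt,
          f = ρ ≫ L.FI.map f ≫ coprod.desc L.it L.δt ∧
          L.subLE (W (n + 1)).α (coprod.desc (W n).α f) ∧
          L.subLE (coprod.desc (W n).α f) ((W (n + 1)).α)) ∧
    (L.Closed (W n) → L.Consistent (W n) →
      (∀ (S' : C) (ρ : S' ⟶ L.FI.obj S'), L.Recursive ρ → L.CorrectUpTo (W n) ρ) →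
      W (n + 1) = W n)

end LearnCtx

/-!
Closedness and consistency transfer along the image maps that the factorisation system provides
for `α' ≤ α` and `β ≤ β'`. Hence a step of the algorithm that made no strict progress would
contradict the defect that triggered it: the old wrapper would already be closed, or consistent,
or correct up to the counterexample, whose run then factors through the image of `α`, where
every hypothesis automaton agrees with the target. With finitely many classes of subobjects and
quotients, two indices `a < b` carry the same classes; monotonicity squeezes `W (a + 1)`
between them, and strict progress forces `W (a + 1) = W a`.
-/

namespace FactSys

variable {C : Type u} [Category.{v} C] (FS : FactSys C)

lemma hfac_assoc {X Y Z : C} (f : X ⟶ Y) (h : Y ⟶ Z) : FS.ep f ≫ FS.mo f ≫ h = f ≫ h := by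
  rw [← Category.assoc, FS.hfac]

lemma exists_lift_mo {X Y Z : C} {g : X ⟶ Y} {m : Z ⟶ Y} (hm : FS.M m) (h : X ⟶ Z)
    (w : h ≫ m = g) : ∃ v : FS.Im g ⟶ Z, v ≫ m = FS.mo g := by
  obtain ⟨v, ⟨-, hv⟩, -⟩ :=
    FS.fill (FS.ep g) m h (FS.mo g) (FS.hep g) hm (by rw [w, FS.hfac])
  exact ⟨v, hv⟩

lemma exists_desc_ep {X Y Z : C} {g : X ⟶ Y} {e : X ⟶ Z} (he : FS.E e) (h : Z ⟶ Y)
    (w : e ≫ h = g) : ∃ u : Z ⟶ FS.Im g, e ≫ u = FS.ep g := by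
  obtain ⟨u, ⟨hu, -⟩, -⟩ :=
    FS.fill e (FS.mo g) (FS.ep g) h he (FS.hmo g) (by rw [w, FS.hfac])
  exact ⟨u, hu⟩

lemma exists_imMap {X Y X' Y' : C} {f : X ⟶ Y} {f' : X' ⟶ Y'} (a : X ⟶ X') (b : Y ⟶ Y')
    (w : f ≫ b = a ≫ f') :
    ∃ d : FS.Im f ⟶ FS.Im f',
      FS.ep f ≫ d = a ≫ FS.ep f' ∧ d ≫ FS.mo f' = FS.mo f ≫ b := by
  obtain ⟨d, hd, -⟩ := FS.fill (FS.ep f) (FS.mo f') (a ≫ FS.ep f') (FS.mo f ≫ b)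
    (FS.hep f) (FS.hmo f') (by rw [Category.assoc, FS.hfac, ← w, FS.hfac_assoc])
  exact ⟨d, hd⟩

end FactSys

lemma solution_comp_of_mono {C : Type u} [Category.{v} C] {G : C ⥤ C} {S A X Y P : C}
    {ρ : S ⟶ G.obj S} {x : G.obj X ⟶ X} {y : G.obj Y ⟶ Y} {f : S ⟶ X}
    (hf : f = ρ ≫ G.map f ≫ x) {ψ : S ⟶ A} {k : A ⟶ X} (hψ : ψ ≫ k = f) {q : A ⟶ Y}
    {m : Y ⟶ P} [Mono m] {β : X ⟶ P} (hq : q ≫ m = k ≫ β)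
    (hqG : G.map q ≫ y ≫ m = G.map k ≫ x ≫ β) :
    ψ ≫ q = ρ ≫ G.map (ψ ≫ q) ≫ y := by
  rw [← cancel_mono m]
  calc (ψ ≫ q) ≫ m = f ≫ β := by rw [Category.assoc, hq, reassoc_of% hψ]
    _ = ρ ≫ G.map ψ ≫ G.map k ≫ x ≫ β := by
      rw [hf, ← hψ]
      simp only [Functor.map_comp, Category.assoc]
    _ = (ρ ≫ G.map (ψ ≫ q) ≫ y) ≫ m := by
      rw [← hqG]
      simp only [Functor.map_comp, Category.assoc]

lemma exists_of_map_eq_of_lt {ι : Type*} [Finite ι] (c : ℕ → ι) {p : ℕ → Prop}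
    (h : ∀ a b, a < b → c a = c b → p a) : ∃ n, p n := by
  obtain ⟨a, b, hne, hab⟩ := Finite.exists_ne_map_eq_of_infinite c
  rcases hne.lt_or_gt with hlt | hlt
  · exact ⟨a, h a b hlt hab⟩
  · exact ⟨b, h b a hlt hab.symm⟩

namespace LearnCtx

variable {C : Type u} [Category.{v} C] [HasBinaryCoproducts C] (L : LearnCtx C)

lemma subLE_refl {X : C} (f : X ⟶ L.Qt) : L.subLE f f :=
  ⟨𝟙 _, Category.id_comp _⟩

lemma subLE_trans {X Y Z : C} {f : X ⟶ L.Qt} {g : Y ⟶ L.Qt} {h : Z ⟶ L.Qt}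
    (hfg : L.subLE f g) (hgh : L.subLE g h) : L.subLE f h := by
  obtain ⟨u, hu⟩ := hfg
  obtain ⟨v, hv⟩ := hgh
  exact ⟨u ≫ v, by rw [Category.assoc, hv, hu]⟩

lemma quotLE_refl {X : C} (f : L.Qt ⟶ X) : L.quotLE f f :=
  ⟨𝟙 _, Category.comp_id _⟩

lemma quotLE_trans {X Y Z : C} {f : L.Qt ⟶ X} {g : L.Qt ⟶ Y} {h : L.Qt ⟶ Z}
    (hfg : L.quotLE f g) (hgh : L.quotLE g h) : L.quotLE f h := by
  obtain ⟨u, hu⟩ := hfg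
  obtain ⟨v, hv⟩ := hgh
  exact ⟨u ≫ v, by rw [← Category.assoc, hu, hv]⟩

lemma subLE_of_factor_mo {X Y : C} {f : X ⟶ L.Qt} {g : Y ⟶ L.Qt} (h : X ⟶ L.FS.Im g)
    (w : h ≫ L.FS.mo g = f) : L.subLE f g :=
  L.FS.exists_lift_mo (L.FS.hmo g) h w

lemma subLE_of_factor {X Y : C} {f : X ⟶ L.Qt} {g : Y ⟶ L.Qt} (h : X ⟶ Y) (w : h ≫ g = f) :
    L.subLE f g :=
  L.subLE_of_factor_mo (h ≫ L.FS.ep g) (by rw [Category.assoc, L.FS.hfac, w])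

lemma quotLE_of_factor_ep {X Y : C} {f : L.Qt ⟶ X} {g : L.Qt ⟶ Y} (h : L.FS.Im f ⟶ Y)
    (w : L.FS.ep f ≫ h = g) : L.quotLE f g :=
  L.FS.exists_desc_ep (L.FS.hep f) h w

lemma quotLE_of_factor {X Y : C} {f : L.Qt ⟶ X} {g : L.Qt ⟶ Y} (h : X ⟶ Y) (w : f ≫ h = g) :
    L.quotLE f g :=
  L.quotLE_of_factor_ep (L.FS.mo f ≫ h) (by rw [L.FS.hfac_assoc, w])

lemma subLE_of_subLE_mo {X Y : C} {f : X ⟶ L.Qt} {g : Y ⟶ L.Qt}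
    (h : L.subLE (L.FS.mo f) (L.FS.mo g)) : L.subLE f g :=
  L.subLE_trans (L.subLE_trans (L.subLE_of_factor (L.FS.ep f) (L.FS.hfac f)) h)
    (L.subLE_of_factor_mo (𝟙 _) (Category.id_comp _))

lemma quotLE_of_quotLE_ep {X Y : C} {f : L.Qt ⟶ X} {g : L.Qt ⟶ Y}
    (h : L.quotLE (L.FS.ep f) (L.FS.ep g)) : L.quotLE f g :=
  L.quotLE_trans (L.quotLE_trans (L.quotLE_of_factor_ep (𝟙 _) (Category.comp_id _)) h)
    (L.quotLE_of_factor (L.FS.mo g) (L.FS.hfac g))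

lemma subLE_of_sigma_eq {a b : Σ X : C, X ⟶ L.Qt} (h : a = b) : L.subLE a.2 b.2 :=
  h ▸ L.subLE_refl a.2

lemma quotLE_of_sigma_eq {a b : Σ X : C, L.Qt ⟶ X} (h : a = b) : L.quotLE a.2 b.2 :=
  h ▸ L.quotLE_refl a.2

lemma wrapper_eq_of_parts_eq {V V' : Wrapper L.Qt} (hα : L.αPart V = L.αPart V')
    (hβ : L.βPart V = L.βPart V') : V = V' := by
  obtain ⟨S, P, α, β⟩ := V
  obtain ⟨S', P', α', β'⟩ := V'
  cases hα
  cases hβ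
  rfl

lemma exists_factor_mo_of_subLE {X Y : C} {f : X ⟶ L.Qt} {g : Y ⟶ L.Qt} (h : L.subLE f g) :
    ∃ φ : X ⟶ L.FS.Im g, φ ≫ L.FS.mo g = f := by
  obtain ⟨u, hu⟩ := h
  exact ⟨L.FS.ep f ≫ u, by rw [Category.assoc, hu, L.FS.hfac]⟩

lemma exists_map_im_comp_of_subLE {S S' P : C} {α : S ⟶ L.Qt} {α' : S' ⟶ L.Qt}
    (h : L.subLE α' α) (β : L.Qt ⟶ P) :
    ∃ v : L.FS.Im (α' ≫ β) ⟶ L.FS.Im (α ≫ β),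
      v ≫ L.FS.mo (α ≫ β) = L.FS.mo (α' ≫ β) := by
  obtain ⟨u, hu⟩ := h
  obtain ⟨d, -, hd⟩ := L.FS.exists_imMap (f' := α ≫ β) (𝟙 _) β (Category.id_comp _).symm
  exact L.FS.exists_lift_mo (L.FS.hmo _) (L.FS.ep α' ≫ u ≫ d)
    (by rw [Category.assoc, Category.assoc, hd, reassoc_of% hu, L.FS.hfac_assoc])

lemma exists_map_im_comp_of_quotLE {S P P' : C} {β : L.Qt ⟶ P} {β' : L.Qt ⟶ P'}
    (h : L.quotLE β β') (α : S ⟶ L.Qt) :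
    ∃ w : L.FS.Im (α ≫ β) ⟶ L.FS.Im (α ≫ β'),
      L.FS.ep (α ≫ β) ≫ w = L.FS.ep (α ≫ β') := by
  obtain ⟨u, hu⟩ := h
  obtain ⟨d, hd, -⟩ := L.FS.exists_imMap (f' := β) α (𝟙 _) (Category.comp_id _)
  exact L.FS.exists_desc_ep (L.FS.hep _) (d ≫ u ≫ L.FS.mo β')
    (by rw [reassoc_of% hd, reassoc_of% hu, L.FS.hfac])

lemma closed_of_locClosed {V V' : Wrapper L.Qt} (hβ : L.βPart V' = L.βPart V)
    (hle : L.subLE V'.α V.α) (hloc : L.LocClosed V' V.α) : L.Closed V := by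
  obtain ⟨S', P', α', β'⟩ := V'
  obtain ⟨S, P, α, β⟩ := V
  cases hβ
  obtain ⟨-, ⟨iW, hiW⟩, ⟨lc, hlc⟩⟩ := hloc
  obtain ⟨v, hv⟩ := L.exists_map_im_comp_of_subLE hle _
  exact ⟨⟨iW ≫ v, (Category.assoc _ _ _).trans ((iW ≫= hv).trans hiW)⟩,
    ⟨lc ≫ v, (Category.assoc _ _ _).trans ((lc ≫= hv).trans hlc)⟩⟩

lemma consistent_of_locConsistent {V V' : Wrapper L.Qt} (hα : L.αPart V' = L.αPart V)
    (hle : L.quotLE V.β V'.β) (hloc : L.LocConsistent V' V.β) : L.Consistent V := by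
  obtain ⟨S', P', α', β'⟩ := V'
  obtain ⟨S, P, α, β⟩ := V
  cases hα
  obtain ⟨-, ⟨oW, hoW⟩, ⟨lc, hlc⟩⟩ := hloc
  obtain ⟨w, hw⟩ := L.exists_map_im_comp_of_quotLE hle _
  exact ⟨⟨w ≫ oW, (Category.assoc _ _ _).symm.trans ((hw =≫ oW).trans hoW)⟩,
    ⟨L.F.map w ≫ lc,
      (L.F.map_comp_assoc _ _ _).symm.trans ((L.F.congr_map hw =≫ lc).trans hlc)⟩⟩

lemma FI_map_comp_desc {X Y Z T : C} (g : X ⟶ Y) (a : L.I ⟶ Z) (b : L.F.obj Y ⟶ Z)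
    (k : Z ⟶ T) :
    L.FI.map g ≫ coprod.desc a b ≫ k = coprod.desc (a ≫ k) (L.F.map g ≫ b ≫ k) := by
  change coprod.map (𝟙 L.I) (L.F.map g) ≫ coprod.desc a b ≫ k = _
  simp

lemma exists_hypothesis_map (V : Wrapper L.Qt) {iW : L.I ⟶ L.H V}
    {δW : L.F.obj (L.H V) ⟶ L.H V} {oW : L.H V ⟶ L.O} (hi : iW ≫ L.tl V = L.it ≫ V.β)
    (hδ : (L.F.map (L.tr V) ≫ δW) ≫ L.tl V = L.F.map V.α ≫ L.δt ≫ V.β)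
    (ho : L.tr V ≫ oW = V.α ≫ L.ot) :
    ∃ q : L.FS.Im V.α ⟶ L.H V, q ≫ L.tl V = L.FS.mo V.α ≫ V.β ∧
      L.FI.map q ≫ coprod.desc iW δW ≫ L.tl V =
        L.FI.map (L.FS.mo V.α) ≫ coprod.desc L.it L.δt ≫ V.β ∧
      q ≫ oW = L.FS.mo V.α ≫ L.ot := by
  obtain ⟨q, hq_ep, hq_mo⟩ : ∃ q : L.FS.Im V.α ⟶ L.H V,
      L.FS.ep V.α ≫ q = 𝟙 _ ≫ L.tr V ∧ q ≫ L.tl V = L.FS.mo V.α ≫ V.β :=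
    L.FS.exists_imMap (f' := V.α ≫ V.β) (𝟙 _) V.β (Category.id_comp _).symm
  rw [Category.id_comp] at hq_ep
  have : Epi (L.FS.ep V.α) := L.FS.hE _ (L.FS.hep _)
  have : Epi (L.F.map (L.FS.ep V.α)) := L.FS.hE _ (L.hFE _ (L.FS.hep _))
  have hqδ : L.F.map q ≫ δW ≫ L.tl V = L.F.map (L.FS.mo V.α) ≫ L.δt ≫ V.β := by
    rw [← cancel_epi (L.F.map (L.FS.ep V.α)), ← L.F.map_comp_assoc, hq_ep,
      ← L.F.map_comp_assoc, L.FS.hfac, ← hδ, Category.assoc]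
  refine ⟨q, hq_mo, ?_, ?_⟩
  · rw [FI_map_comp_desc, FI_map_comp_desc, hi, hqδ]
  · rw [← cancel_epi (L.FS.ep V.α), reassoc_of% hq_ep, L.FS.hfac_assoc]
    exact ho

lemma correctUpTo_of_subLE (V : Wrapper L.Qt) {S' : C} {ρ : S' ⟶ L.FI.obj S'}
    (hρ : L.Recursive ρ) {f : S' ⟶ L.Qt} (hf : f = ρ ≫ L.FI.map f ≫ coprod.desc L.it L.δt)
    (hle : L.subLE (coprod.desc V.α f) V.α) : L.CorrectUpTo V ρ := by
  intro iW δW oW hi hδ ho h g hh hg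
  obtain ⟨q, hq_mo, hq_FI, hq_o⟩ := L.exists_hypothesis_map V hi hδ ho
  obtain ⟨ψ, hψ⟩ : ∃ ψ : S' ⟶ L.FS.Im V.α, ψ ≫ L.FS.mo V.α = f := by
    obtain ⟨φ, hφ⟩ := L.exists_factor_mo_of_subLE hle
    exact ⟨coprod.inr ≫ φ, by rw [Category.assoc, hφ, coprod.inr_desc]⟩
  have : Mono (L.tl V) := L.FS.hM _ (L.FS.hmo _)
  have hψq := solution_comp_of_mono hf hψ hq_mo hq_FI
  rw [(hρ _ _).unique hh hψq, (hρ _ _).unique hg hf, Category.assoc, hq_o, reassoc_of% hψ]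

variable {L} {W : ℕ → Wrapper L.Qt}

theorem IsRun.step (hrun : L.IsRun W) (n : ℕ) :
    L.subLE (W n).α (W (n + 1)).α ∧ L.quotLE (W (n + 1)).β (W n).β ∧
      (L.subLE (W (n + 1)).α (W n).α → L.αPart (W (n + 1)) = L.αPart (W n)) ∧
      (L.quotLE (W n).β (W (n + 1)).β → L.βPart (W (n + 1)) = L.βPart (W n)) := by
  obtain ⟨h_open, h_inconsistent, h_counterexample, h_done⟩ := hrun.2 n
  by_cases hc : L.Closed (W n)
  swap
  · obtain ⟨hβ, hloc⟩ := h_open hc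
    exact ⟨hloc.1, L.quotLE_of_sigma_eq hβ,
      fun hle ↦ absurd (L.closed_of_locClosed hβ hle hloc) hc, fun _ ↦ hβ⟩
  by_cases hs : L.Consistent (W n)
  swap
  · obtain ⟨hα, hloc⟩ := h_inconsistent hc hs
    exact ⟨L.subLE_of_sigma_eq hα.symm, hloc.1, fun _ ↦ hα,
      fun hle ↦ absurd (L.consistent_of_locConsistent hα hle hloc) hs⟩
  by_cases hcorrect :
      ∀ (S' : C) (ρ : S' ⟶ L.FI.obj S'), L.Recursive ρ → L.CorrectUpTo (W n) ρ
  · rw [h_done hc hs hcorrect]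
    exact ⟨L.subLE_refl _, L.quotLE_refl _, fun _ ↦ rfl, fun _ ↦ rfl⟩
  · obtain ⟨hβ, S', ρ, hρ, hincorrect, f, hf, -, hge⟩ := h_counterexample hc hs hcorrect
    exact ⟨L.subLE_trans (L.subLE_of_factor coprod.inl (coprod.inl_desc _ _)) hge,
      L.quotLE_of_sigma_eq hβ,
      fun hle ↦ absurd (L.correctUpTo_of_subLE _ hρ hf (L.subLE_trans hge hle)) hincorrect,
      fun _ ↦ hβ⟩

theorem IsRun.subLE_of_le (hrun : L.IsRun W) {a b : ℕ} (hab : a ≤ b) :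
    L.subLE (W a).α (W b).α := by
  induction b, hab using Nat.le_induction with
  | base => exact L.subLE_refl _
  | succ b _ ih => exact L.subLE_trans ih (hrun.step b).1

theorem IsRun.quotLE_of_le (hrun : L.IsRun W) {a b : ℕ} (hab : a ≤ b) :
    L.quotLE (W b).β (W a).β := by
  induction b, hab using Nat.le_induction with
  | base => exact L.quotLE_refl _
  | succ b _ ih => exact L.quotLE_trans (hrun.step b).2.1 ih

theorem IsRun.exists_succ_eq (hrun : L.IsRun W)
    (hsub : ∃ (k : ℕ) (rep : Fin k → Σ X : C, X ⟶ L.Qt),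
      ∀ (X : C) (f : X ⟶ L.Qt), L.FS.M f →
        ∃ i : Fin k, L.subLE f (rep i).2 ∧ L.subLE (rep i).2 f)
    (hquot : ∃ (k : ℕ) (rep : Fin k → Σ X : C, L.Qt ⟶ X),
      ∀ (X : C) (f : L.Qt ⟶ X), L.FS.E f →
        ∃ i : Fin k, L.quotLE f (rep i).2 ∧ L.quotLE (rep i).2 f) :
    ∃ n, W (n + 1) = W n := by
  obtain ⟨k, repS, hrepS⟩ := hsub
  obtain ⟨m, repQ, hrepQ⟩ := hquot
  choose cS hcS using fun n ↦ hrepS _ (L.FS.mo (W n).α) (L.FS.hmo _)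
  choose cQ hcQ using fun n ↦ hrepQ _ (L.FS.ep (W n).β) (L.FS.hep _)
  refine exists_of_map_eq_of_lt (fun n ↦ (cS n, cQ n)) fun a b hab hc ↦ ?_
  obtain ⟨hcS_eq, hcQ_eq⟩ : cS a = cS b ∧ cQ a = cQ b := Prod.ext_iff.mp hc
  have hα : L.subLE (W b).α (W a).α :=
    L.subLE_of_subLE_mo (L.subLE_trans (hcS b).1 (hcS_eq ▸ (hcS a).2))
  have hβ : L.quotLE (W a).β (W b).β :=
    L.quotLE_of_quotLE_ep (L.quotLE_trans (hcQ a).1 (hcQ_eq ▸ (hcQ b).2))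
  obtain ⟨-, -, hα_eq, hβ_eq⟩ := hrun.step a
  exact L.wrapper_eq_of_parts_eq (hα_eq (L.subLE_trans (hrun.subLE_of_le hab) hα))
    (hβ_eq (L.quotLE_trans hβ (hrun.quotLE_of_le hab)))

end LearnCtx

/-- In any run of the abstract learning algorithm the state-selector subobjects are
non-decreasing and the test quotients non-increasing, with strict progress:
`α_n^◁ ≤ α_{n+1}^◁`, `β_{n+1}^▷ ≤ β_n^▷`, and if `α_{n+1}^◁ ≤ α_n^◁` then `α_{n+1} = α_n`,
if `β_n^▷ ≤ β_{n+1}^▷` then `β_{n+1} = β_n`.  Consequently, if `Q_t` has only finitely many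
isomorphism classes of `M`-subobjects and of `E`-quotients, then every run stabilises. -/
theorem stmt17 {C : Type u} [Category.{v} C] [HasBinaryCoproducts C]
    (L : LearnCtx C) (W : ℕ → Wrapper L.Qt) (hrun : L.IsRun W) :
    (∀ n : ℕ,
      L.subLE (W n).α (W (n + 1)).α ∧
      L.quotLE (W (n + 1)).β (W n).β ∧
      (L.subLE (W (n + 1)).α (W n).α → L.αPart (W (n + 1)) = L.αPart (W n)) ∧
      (L.quotLE (W n).β (W (n + 1)).β → L.βPart (W (n + 1)) = L.βPart (W n))) ∧
    ((∃ (k : ℕ) (rep : Fin k → Σ X : C, X ⟶ L.Qt),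
        ∀ (X : C) (f : X ⟶ L.Qt), L.FS.M f →
          ∃ i : Fin k, L.subLE f (rep i).2 ∧ L.subLE (rep i).2 f) →
      (∃ (k : ℕ) (rep : Fin k → Σ X : C, L.Qt ⟶ X),
        ∀ (X : C) (f : L.Qt ⟶ X), L.FS.E f →
          ∃ i : Fin k, L.quotLE f (rep i).2 ∧ L.quotLE (rep i).2 f) →
      ∃ n : ℕ, W (n + 1) = W n) :=
  ⟨hrun.step, hrun.exists_succ_eq⟩
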